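/- arXiv:1012.5723 — 3 statements merged into one kernel-verified Lean document; each statement's English description precedes it below -/
import Mathlib

section
/- Let C > 0, b ∈ ℝ, and define r_ρ = sqrt((log ρ + b)/(C ρ)) for ρ large enough that log ρ + b > 0. If g : ℝ≥0 → [0,1] satisfies lim_{x→∞} g(x) x² (log x)² = 0, then for any fixed ε with 0 < ε < 1, lim_{ρ→∞} (log ρ + b) ∫_{r_ρ^{-ε}}^∞ 2πx g(x) dx = 0. -/
/-! Beyond a large `R` the hypothesis gives `2πx g(x) ≤ δ / (x log² x)`, and `-1 / log x` is an
antiderivative of `1 / (x log² x)`, so the tail integral from `R` is at most `δ / log R`: it is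
`o(1 / log R)`. For `R = r_ρ^(-ε)` one has `log R = (ε/2)(log C + log ρ - log (log ρ + b))`, which
is eventually at least `(ε/4) log ρ`; hence the prefactor `log ρ + b` is `O(log R)`. -/

open MeasureTheory Filter Real Asymptotics Set Topology

lemma hasDerivAt_neg_inv_log {x : ℝ} (hx : 1 < x) :
    HasDerivAt (fun y => -(log y)⁻¹) (x * log x ^ 2)⁻¹ x := by
  have hlog : log x ≠ 0 := (log_pos hx).ne'
  have h := ((hasDerivAt_log (by positivity : x ≠ 0)).inv hlog).neg
  rw [neg_div, neg_neg] at h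
  exact h.congr_deriv (by rw [mul_inv, div_eq_mul_inv])

section InvMulLogSq

variable {a : ℝ}

lemma tendsto_neg_inv_log_atTop : Tendsto (fun y => -(log y)⁻¹) atTop (𝓝 0) := by
  simpa using tendsto_log_atTop.inv_tendsto_atTop.neg

lemma continuousWithinAt_neg_inv_log (ha : 1 < a) :
    ContinuousWithinAt (fun y => -(log y)⁻¹) (Ici a) a :=
  ((continuousAt_log (by positivity)).inv₀ (log_pos ha).ne').neg.continuousWithinAt

lemma integrableOn_Ioi_inv_mul_log_sq (ha : 1 < a) :
    IntegrableOn (fun x => (x * log x ^ 2)⁻¹) (Ioi a) :=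
  integrableOn_Ioi_deriv_of_nonneg (continuousWithinAt_neg_inv_log ha)
    (fun _ hx => hasDerivAt_neg_inv_log (ha.trans hx))
    (fun x (hx : a < x) => inv_nonneg.mpr (mul_nonneg (by linarith) (sq_nonneg _)))
    tendsto_neg_inv_log_atTop

lemma integral_Ioi_inv_mul_log_sq (ha : 1 < a) :
    ∫ x in Ioi a, (x * log x ^ 2)⁻¹ = (log a)⁻¹ := by
  rw [integral_Ioi_of_hasDerivAt_of_nonneg (continuousWithinAt_neg_inv_log ha)
    (fun _ hx => hasDerivAt_neg_inv_log (ha.trans hx))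
    (fun x (hx : a < x) => inv_nonneg.mpr (mul_nonneg (by linarith) (sq_nonneg _)))
    tendsto_neg_inv_log_atTop]
  ring

end InvMulLogSq

lemma setIntegral_Ioi_le_div_log {f : ℝ → ℝ} {R δ : ℝ} (hR : 1 < R)
    (hf₀ : ∀ x > R, 0 ≤ f x) (hfδ : ∀ x > R, f x * x * log x ^ 2 ≤ δ) :
    ∫ x in Ioi R, f x ≤ δ / log R := by
  have hbound : ∀ x > R, f x ≤ δ * (x * log x ^ 2)⁻¹ := fun x hx => by
    have : 0 < x * log x ^ 2 := mul_pos (by linarith) (pow_pos (log_pos (hR.trans hx)) 2)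
    rw [← div_eq_mul_inv, le_div_iff₀ this, ← mul_assoc]
    exact hfδ x hx
  calc ∫ x in Ioi R, f x ≤ ∫ x in Ioi R, δ * (x * log x ^ 2)⁻¹ :=
        integral_mono_of_nonneg ((ae_restrict_mem measurableSet_Ioi).mono hf₀)
          ((integrableOn_Ioi_inv_mul_log_sq hR).const_mul δ)
          ((ae_restrict_mem measurableSet_Ioi).mono hbound)
    _ = δ / log R := by
        rw [integral_const_mul, integral_Ioi_inv_mul_log_sq hR, div_eq_mul_inv]

lemma tendsto_log_mul_setIntegral_Ioi {f : ℝ → ℝ} (hf₀ : ∀ᶠ x in atTop, 0 ≤ f x)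
    (hf : Tendsto (fun x => f x * x * log x ^ 2) atTop (𝓝 0)) :
    Tendsto (fun R => log R * ∫ x in Ioi R, f x) atTop (𝓝 0) := by
  rw [Metric.tendsto_nhds]
  intro δ hδ
  obtain ⟨x₀, hx₀⟩ := eventually_atTop.mp
    (hf₀.and ((Metric.tendsto_nhds.mp hf) (δ / 2) (half_pos hδ)))
  filter_upwards [eventually_ge_atTop x₀, eventually_gt_atTop 1] with R hR₀ hR₁
  have hlog : 0 < log R := log_pos hR₁
  have hf₀R : ∀ x > R, 0 ≤ f x := fun x hx => (hx₀ x (hR₀.trans hx.le)).1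
  have hfδR : ∀ x > R, f x * x * log x ^ 2 ≤ δ / 2 := fun x hx =>
    (le_abs_self _).trans (by simpa using (hx₀ x (hR₀.trans hx.le)).2.le)
  have hint₀ : 0 ≤ ∫ x in Ioi R, f x := setIntegral_nonneg measurableSet_Ioi hf₀R
  have hint : log R * ∫ x in Ioi R, f x ≤ δ / 2 := by
    have := mul_le_mul_of_nonneg_left (setIntegral_Ioi_le_div_log hR₁ hf₀R hfδR) hlog.le
    rwa [mul_div_cancel₀ _ hlog.ne'] at this
  rw [Real.dist_eq, sub_zero, abs_of_nonneg (mul_nonneg hlog.le hint₀)]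
  linarith

lemma isBigO_log_add_const (b : ℝ) : (fun ρ => log ρ + b) =O[atTop] log :=
  (isBigO_refl _ _).add isLittleO_const_log_atTop.isBigO

/-- The radius `r_ρ`. -/
noncomputable def shrinkingRadius (C b ρ : ℝ) : ℝ := √((log ρ + b) / (C * ρ))

section ShrinkingRadius

variable {C b ε : ℝ}

lemma log_shrinkingRadius_rpow {ρ : ℝ} (hC : 0 < C) (hρ : 0 < ρ) (hb : 0 < log ρ + b) :
    log (shrinkingRadius C b ρ ^ (-ε)) = ε / 2 * (log C + log ρ - log (log ρ + b)) := by
  have hq : 0 < (log ρ + b) / (C * ρ) := by positivity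
  rw [shrinkingRadius, log_rpow (sqrt_pos.mpr hq), log_sqrt hq.le,
    log_div hb.ne' (by positivity), log_mul hC.ne' hρ.ne']
  ring

lemma eventually_le_log_shrinkingRadius_rpow (hC : 0 < C) (hε : 0 < ε) :
    ∀ᶠ ρ in atTop, ε / 4 * log ρ ≤ log (shrinkingRadius C b ρ ^ (-ε)) := by
  have hb : Tendsto (fun ρ => log ρ + b) atTop atTop :=
    tendsto_atTop_add_const_right _ b tendsto_log_atTop
  have hloglog : (fun ρ => log (log ρ + b)) =o[atTop] log :=
    (isLittleO_log_id_atTop.comp_tendsto hb).trans_isBigO (isBigO_log_add_const b)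
  filter_upwards [hloglog.bound (by norm_num : (0 : ℝ) < 1 / 4), eventually_gt_atTop 0,
    hb.eventually_gt_atTop 0, tendsto_log_atTop.eventually_ge_atTop (-4 * log C),
    tendsto_log_atTop.eventually_ge_atTop 0] with ρ hρloglog hρ hρb hρC hρlog
  rw [log_shrinkingRadius_rpow hC hρ hρb]
  rw [norm_of_nonneg hρlog, Real.norm_eq_abs] at hρloglog
  have := (le_abs_self _).trans hρloglog
  nlinarith

lemma tendsto_shrinkingRadius_rpow_atTop (hC : 0 < C) (hε : 0 < ε) :
    Tendsto (fun ρ => shrinkingRadius C b ρ ^ (-ε)) atTop atTop := by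
  refine tendsto_atTop_mono' atTop ?_
    (tendsto_log_atTop.const_mul_atTop (by positivity : 0 < ε / 4))
  filter_upwards [eventually_le_log_shrinkingRadius_rpow hC hε] with ρ hρ
  exact hρ.trans (log_le_self (rpow_nonneg (sqrt_nonneg _) _))

lemma isBigO_log_log_shrinkingRadius_rpow (hC : 0 < C) (hε : 0 < ε) :
    log =O[atTop] fun ρ => log (shrinkingRadius C b ρ ^ (-ε)) := by
  refine IsBigO.of_bound (4 / ε) ?_
  filter_upwards [eventually_le_log_shrinkingRadius_rpow hC hε,
    tendsto_log_atTop.eventually_ge_atTop 0] with ρ hρ hρlog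
  rw [norm_of_nonneg hρlog, norm_of_nonneg ((mul_nonneg (by positivity) hρlog).trans hρ)]
  calc log ρ = 4 / ε * (ε / 4 * log ρ) := by field_simp
    _ ≤ _ := by gcongr

end ShrinkingRadius

theorem stmt_3_general (g : ℝ → ℝ) (C b ε : ℝ) (hC : 0 < C) (hε : 0 < ε)
    (hg01 : ∀ x, 0 ≤ x → 0 ≤ g x ∧ g x ≤ 1)
    (hsmall : Tendsto (fun x : ℝ => g x * x ^ 2 * (Real.log x) ^ 2) atTop (nhds 0)) :
    Tendsto
      (fun ρ : ℝ =>
        (Real.log ρ + b) *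
          ∫ x in Set.Ioi ((Real.sqrt ((Real.log ρ + b) / (C * ρ))) ^ (-ε : ℝ)),
            2 * π * x * g x)
      atTop (nhds 0) := by
  have hf₀ : ∀ᶠ x in atTop, 0 ≤ 2 * π * x * g x := by
    filter_upwards [eventually_ge_atTop 0] with x hx
    exact mul_nonneg (by positivity) (hg01 x hx).1
  have hf : Tendsto (fun x => 2 * π * x * g x * x * log x ^ 2) atTop (𝓝 0) := by
    simpa only [mul_zero] using (hsmall.const_mul (2 * π)).congr fun x => by ring
  have hlogR : (fun ρ => log ρ + b) =O[atTop] fun ρ => log (shrinkingRadius C b ρ ^ (-ε)) :=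
    (isBigO_log_add_const b).trans (isBigO_log_log_shrinkingRadius_rpow hC hε)
  exact (hlogR.mul (isBigO_refl _ _)).trans_tendsto
    ((tendsto_log_mul_setIntegral_Ioi hf₀ hf).comp (tendsto_shrinkingRadius_rpow_atTop hC hε))

/-- Let `C > 0`, `b ∈ ℝ`, and `r_ρ = sqrt((log ρ + b)/(C ρ))`. If
`g : ℝ≥0 → [0,1]` satisfies `lim_{x→∞} g(x) x² (log x)² = 0`, then for any fixed
`ε ∈ (0,1)`, `lim_{ρ→∞} (log ρ + b) ∫_{r_ρ^{-ε}}^∞ 2πx g(x) dx = 0`. -/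
theorem stmt_3 (g : ℝ → ℝ) (C b ε : ℝ) (hC : 0 < C) (hε : 0 < ε) (hε1 : ε < 1)
    (hg01 : ∀ x, 0 ≤ x → 0 ≤ g x ∧ g x ≤ 1)
    (hsmall : Tendsto (fun x : ℝ => g x * x ^ 2 * (Real.log x) ^ 2) atTop (nhds 0)) :
    Tendsto
      (fun ρ : ℝ =>
        (Real.log ρ + b) *
          ∫ x in Set.Ioi ((Real.sqrt ((Real.log ρ + b) / (C * ρ))) ^ (-ε : ℝ)),
            2 * π * x * g x)
      atTop (nhds 0) :=
  stmt_3_general g C b ε hC hε hg01 hsmall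
end

section
/- With notation as in the isolated-node theorems, E(W)/E(W^∞) = ∫_{A_{1/r_ρ}} (log ρ + b)/(Cρ) · exp(∫_{ℝ² \ A_{1/r_ρ}} (log ρ + b)/C · g(‖x - y‖) dx) dy, and this ratio is strictly greater than 1 whenever g has unbounded support. -/
open MeasureTheory Filter Real Set

/-! Translation invariance of Lebesgue measure gives `∫_A g(‖x-y‖) dx + ∫_{Aᶜ} g(‖x-y‖) dx = C`
for every `y`, and with `λC = log ρ + b` this turns `λ exp(-λ ∫_A g(‖x-y‖) dx)` into
`e^{-b} (λ/ρ) exp(λ ∫_{Aᶜ} g(‖x-y‖) dx)`, which is the identity.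
The square `A` has area `1/r_ρ² = Cρ/(log ρ + b)`, so the constant `λ/ρ` integrates to `1` over
it. An antitone `g` with unbounded support is positive on all of `[0, ∞)`, so the integral over
the open set `Aᶜ` is positive and the integrand exceeds `λ/ρ` everywhere. -/

section Translation

variable {G : Type*} [AddGroup G] [MeasurableSpace G] {μ : Measure G}

theorem setIntegral_add_compl_comp_sub_right [MeasurableAdd G] [μ.IsAddRightInvariant]
    {E : Type*} [NormedAddCommGroup E] [NormedSpace ℝ E] {f : G → E} (hf : Integrable f μ)
    {s : Set G} (hs : MeasurableSet s) (y : G) :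
    ∫ x in s, f (x - y) ∂μ + ∫ x in sᶜ, f (x - y) ∂μ = ∫ x, f x ∂μ := by
  rw [integral_add_compl hs (hf.comp_sub_right y), integral_sub_right_eq_self]

theorem setIntegral_comp_sub_right_le_integral [MeasurableAdd G] [μ.IsAddRightInvariant]
    {f : G → ℝ} (hf : Integrable f μ) (hf0 : 0 ≤ f) (s : Set G) (y : G) :
    ∫ x in s, f (x - y) ∂μ ≤ ∫ x, f x ∂μ := by
  rw [← integral_sub_right_eq_self f y]
  exact setIntegral_le_integral (hf.comp_sub_right y) (ae_of_all _ fun x => hf0 (x - y))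

theorem measurable_setIntegral_comp_sub_right [MeasurableSub₂ G] [SFinite μ] {f : G → ℝ}
    (hf : Measurable f) (s : Set G) : Measurable fun y => ∫ x in s, f (x - y) ∂μ :=
  (hf.comp (measurable_snd.sub measurable_fst)).stronglyMeasurable.integral_prod_right'.measurable

theorem integrableOn_exp_mul_setIntegral_comp_sub_right [MeasurableAdd G] [MeasurableSub₂ G]
    [SFinite μ] [μ.IsAddRightInvariant]
    {f : G → ℝ} (hf : Measurable f) (hfi : Integrable f μ) (hf0 : 0 ≤ f) (s : Set G)
    {t : Set G} (ht : μ t ≠ ⊤) {k : ℝ} (hk : 0 ≤ k) :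
    IntegrableOn (fun y => exp (k * ∫ x in s, f (x - y) ∂μ)) t μ := by
  refine Measure.integrableOn_of_bounded (M := exp (k * ∫ x, f x ∂μ)) ht
    (measurable_exp.comp
      ((measurable_setIntegral_comp_sub_right hf s).const_mul k)).aestronglyMeasurable
    (ae_of_all _ fun y => ?_)
  rw [norm_of_nonneg (exp_pos _).le, exp_le_exp]
  exact mul_le_mul_of_nonneg_left (setIntegral_comp_sub_right_le_integral hfi hf0 s y) hk

end Translation

section SetIntegral

variable {X : Type*} [MeasurableSpace X] {μ : Measure X} {s : Set X} {f : X → ℝ}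

theorem setIntegral_pos_of_forall_pos (hs : MeasurableSet s) (hf : IntegrableOn f s μ)
    (hpos : ∀ x ∈ s, 0 < f x) (hμ : μ s ≠ 0) : 0 < ∫ x in s, f x ∂μ := by
  rw [setIntegral_pos_iff_support_of_nonneg_ae
    ((ae_restrict_iff' hs).2 (ae_of_all _ fun x hx => (hpos x hx).le)) hf,
    inter_eq_right.2 fun x hx => Function.mem_support.2 (hpos x hx).ne']
  exact pos_iff_ne_zero.2 hμ

theorem measureReal_mul_lt_setIntegral (hs : MeasurableSet s) (hf : IntegrableOn f s μ) {c : ℝ}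
    (hc : ∀ x ∈ s, c < f x) (hμ : 0 < μ.real s) : μ.real s * c < ∫ x in s, f x ∂μ := by
  have hμ' := ENNReal.toReal_pos_iff.1 hμ
  have hconst : IntegrableOn (fun _ => c) s μ := integrableOn_const hμ'.2.ne
  rw [← sub_pos, ← smul_eq_mul, ← setIntegral_const, ← integral_sub hf hconst]
  exact setIntegral_pos_of_forall_pos hs (hf.sub hconst) (fun x hx => sub_pos.2 (hc x hx))
    hμ'.1.ne'

end SetIntegral

theorem AntitoneOn.pos_of_unbounded_support {g : ℝ → ℝ} (hg : AntitoneOn g (Ici 0))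
    (hsupp : ∀ M : ℝ, ∃ x, M < x ∧ 0 < g x) ⦃x : ℝ⦄ (hx : 0 ≤ x) : 0 < g x := by
  obtain ⟨z, hxz, hz⟩ := hsupp x
  exact hz.trans_le (hg hx (hx.trans hxz.le) hxz.le)

section Cube

variable (ι : Type*)

def centeredCube (r : ℝ) : Set (EuclideanSpace ℝ ι) := {x | ∀ i, |x i| ≤ r}

theorem centeredCube_eq_preimage (r : ℝ) :
    centeredCube ι r =
      (MeasurableEquiv.toLp 2 (ι → ℝ)).symm ⁻¹' univ.pi fun _ => Icc (-r) r := by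
  ext x
  simp only [centeredCube, mem_ofPred_eq, mem_preimage, mem_univ_pi, mem_Icc, abs_le]
  rfl

theorem isClosed_centeredCube (r : ℝ) : IsClosed (centeredCube ι r) := by
  simp only [centeredCube, ofPred_forall]
  exact isClosed_iInter fun i =>
    isClosed_le ((continuous_apply i).comp (PiLp.continuous_ofLp 2 _)).abs continuous_const

theorem centeredCube_compl_nonempty [Nonempty ι] (r : ℝ) : (centeredCube ι r)ᶜ.Nonempty := by
  obtain ⟨i⟩ := ‹Nonempty ι›
  refine ⟨WithLp.toLp 2 fun _ => |r| + 1, fun h => ?_⟩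
  have hi : |(|r| + 1)| ≤ r := h i
  linarith [le_abs_self r, le_abs_self (|r| + 1)]

theorem volume_centeredCube [Fintype ι] (r : ℝ) :
    volume (centeredCube ι r) = ENNReal.ofReal (2 * r) ^ Fintype.card ι := by
  rw [centeredCube_eq_preimage,
    (EuclideanSpace.volume_preserving_symm_measurableEquiv_toLp ι).measure_preimage
    (MeasurableSet.univ_pi fun _ => measurableSet_Icc).nullMeasurableSet, volume_pi_pi]
  simp only [Real.volume_Icc, Finset.prod_const, Finset.card_univ]
  ring_nf

theorem measureReal_centeredCube [Fintype ι] {r : ℝ} (hr : 0 ≤ r) :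
    volume.real (centeredCube ι r) = (2 * r) ^ Fintype.card ι := by
  rw [measureReal_def, volume_centeredCube, ENNReal.toReal_pow,
    ENNReal.toReal_ofReal (by positivity)]

end Cube

theorem mul_exp_neg_div_exp_neg_eq_of_add_eq {C b ρ a c : ℝ} (hC : C ≠ 0) (hρ : 0 < ρ)
    (hac : a + c = C) :
    (log ρ + b) / C * exp (-((log ρ + b) / C * a)) / exp (-b) =
      (log ρ + b) / (C * ρ) * exp ((log ρ + b) / C * c) := by
  have hexp : -((log ρ + b) / C * a) = -b - log ρ + (log ρ + b) / C * c := by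
    rw [show a = C - c by linarith, mul_sub, div_mul_cancel₀ _ hC]; ring
  rw [hexp, exp_add, exp_sub, exp_log hρ]
  field_simp

/-- With `λ = (log ρ + b)/C`, `A` the square of side `1/r_ρ` centered at the
origin, `E(W) = ∫_A λ exp(-λ ∫_A g(‖x-y‖) dx) dy` and `E(W^∞) = e^{-b}`, one has
`E(W)/E(W^∞) = ∫_A (log ρ + b)/(Cρ) · exp(∫_{ℝ²\A} (log ρ + b)/C · g(‖x-y‖) dx) dy`,
and this ratio is strictly greater than `1` whenever `g` has unbounded support. -/
theorem stmt_9 (g : ℝ → ℝ) (C b ρ : ℝ)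
    (hg_meas : Measurable g)
    (hg01 : ∀ x, 0 ≤ x → 0 ≤ g x ∧ g x ≤ 1)
    (hmono : AntitoneOn g (Set.Ici 0))
    (hint : Integrable (fun x : EuclideanSpace ℝ (Fin 2) => g ‖x‖))
    (hC : C = ∫ x : EuclideanSpace ℝ (Fin 2), g ‖x‖) (hCpos : 0 < C)
    (hρ : 0 < ρ) (hb : 0 < Real.log ρ + b)
    (A : Set (EuclideanSpace ℝ (Fin 2)))
    (hA : A = {x : EuclideanSpace ℝ (Fin 2) |
        ∀ i, |x i| ≤ 1 / (2 * Real.sqrt ((Real.log ρ + b) / (C * ρ)))}) :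
    ((∫ y in A,
          (Real.log ρ + b) / C *
            Real.exp (-((Real.log ρ + b) / C * ∫ x in A, g ‖x - y‖))) /
        Real.exp (-b) =
      ∫ y in A,
        (Real.log ρ + b) / (C * ρ) *
          Real.exp ((Real.log ρ + b) / C * ∫ x in Aᶜ, g ‖x - y‖)) ∧
    ((∀ M : ℝ, ∃ x, M < x ∧ 0 < g x) →
      1 <
        ∫ y in A,
          (Real.log ρ + b) / (C * ρ) *
            Real.exp ((Real.log ρ + b) / C * ∫ x in Aᶜ, g ‖x - y‖)) := by
  set L := log ρ + b
  have hA' : A = centeredCube (Fin 2) (1 / (2 * √(L / (C * ρ)))) := hA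
  have hAclosed : IsClosed A := hA' ▸ isClosed_centeredCube _ _
  have hg0 : 0 ≤ fun x : EuclideanSpace ℝ (Fin 2) => g ‖x‖ := fun x => (hg01 _ (norm_nonneg x)).1
  refine ⟨?_, fun hsupp => ?_⟩
  · rw [← integral_div]
    congr 1 with y
    refine mul_exp_neg_div_exp_neg_eq_of_add_eq hCpos.ne' hρ ?_
    rw [hC]
    exact setIntegral_add_compl_comp_sub_right hint hAclosed.measurableSet y
  · have hvol : volume.real A * (L / (C * ρ)) = 1 := by
      have : 0 < L / (C * ρ) := by positivity
      rw [hA', measureReal_centeredCube _ (by positivity), Fintype.card_fin]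
      field_simp
      rw [sq_sqrt this.le]
      field_simp
    have hvol_pos : 0 < volume.real A := pos_of_mul_pos_left (hvol ▸ one_pos) (by positivity)
    have hgpos := hmono.pos_of_unbounded_support hsupp
    have hAc : ∀ y, 0 < ∫ x in Aᶜ, g ‖x - y‖ := fun y =>
      setIntegral_pos_of_forall_pos hAclosed.measurableSet.compl
        (hint.comp_sub_right y).integrableOn
        (fun x _ => hgpos (norm_nonneg _))
        (hAclosed.isOpen_compl.measure_pos volume (hA' ▸ centeredCube_compl_nonempty _ _)).ne'
    have hint_exp := integrableOn_exp_mul_setIntegral_comp_sub_right (hg_meas.comp measurable_norm)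
      hint hg0 Aᶜ (ENNReal.toReal_pos_iff.1 hvol_pos).2.ne (k := L / C) (by positivity)
    calc 1 = volume.real A * (L / (C * ρ)) := hvol.symm
      _ < _ := measureReal_mul_lt_setIntegral hAclosed.measurableSet (hint_exp.const_mul _)
        (fun y _ => lt_mul_of_one_lt_right (by positivity)
          (one_lt_exp_iff.2 (mul_pos (by positivity) (hAc y)))) hvol_pos
end

section
/- Let D(x, r) ⊂ ℝ² denote the closed disk of radius r centered at x. For points x₁, x₂ with z = ‖x₂ - x₁‖ ≤ r, the area of D(x₁, r) \ D(x₂, r) is at least √3 · r · z. -/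
/-!
After a measure-preserving isometry the centres are `0` and `(0, z)`. Let `A` be the arc
`x = -√(r² - y²)`, `|y| ≤ (√3/2) r`, of the first circle. Along `A` the chord of the first disk
has half-length `√(r² - y²) ≥ r/2 ≥ z/2`, so sliding `A` by `z` towards the second centre sweeps
a region inside the first disk, and the region stops short of the translate `A + z`, an arc of the
second circle, so it misses the second disk. By Cavalieri this region has area `z` times the
height `√3 r` of `A`.
-/

open MeasureTheory Metric Set

section Isometry

variable {E : Type*} [NormedAddCommGroup E] [InnerProductSpace ℝ E] [FiniteDimensional ℝ E]
  [MeasurableSpace E] [BorelSpace E]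

theorem exists_measurePreserving_isometryEquiv_apply_eq {x₁ x₂ y₁ y₂ : E}
    (h : dist y₂ y₁ = dist x₂ x₁) :
    ∃ g : E ≃ᵢ E, MeasurePreserving g ∧ g y₁ = x₁ ∧ g y₂ = x₂ := by
  set f := (ℝ ∙ ((y₂ - y₁) - (x₂ - x₁)))ᗮ.reflection
  have hf : f (y₂ - y₁) = x₂ - x₁ :=
    Submodule.reflection_sub (by rw [← dist_eq_norm, ← dist_eq_norm, h])
  refine ⟨((IsometryEquiv.subRight y₁).trans f.toIsometryEquiv).trans (IsometryEquiv.addRight x₁),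
    ((measurePreserving_add_right volume x₁).comp f.measurePreserving).comp
      (measurePreserving_sub_right volume y₁), by simp, by simp [hf]⟩

theorem volume_closedBall_diff_closedBall_congr {x₁ x₂ y₁ y₂ : E}
    (h : dist y₂ y₁ = dist x₂ x₁) (r : ℝ) :
    volume (closedBall x₁ r \ closedBall x₂ r) = volume (closedBall y₁ r \ closedBall y₂ r) := by
  obtain ⟨g, hg, rfl, rfl⟩ := exists_measurePreserving_isometryEquiv_apply_eq h
  rw [← hg.measure_preimage
      (measurableSet_closedBall.diff measurableSet_closedBall).nullMeasurableSet,
    preimage_sdiff, g.preimage_closedBall, g.preimage_closedBall, g.symm_apply_apply,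
    g.symm_apply_apply]

end Isometry

theorem volume_regionBetween_add_const {α : Type*} [MeasurableSpace α] (μ : Measure α)
    [SigmaFinite μ] {f : α → ℝ} (hf : Measurable f) {s : Set α} (hs : MeasurableSet s) (c : ℝ) :
    μ.prod volume (regionBetween f (fun x => f x + c) s) = ENNReal.ofReal c * μ s := by
  rw [volume_regionBetween_eq_lintegral' hf (hf.add_const c) hs]
  simp

theorem EuclideanSpace.mem_closedBall_fin_two_iff {p q : EuclideanSpace ℝ (Fin 2)} {r : ℝ}
    (hr : 0 ≤ r) : p ∈ closedBall q r ↔ (p 0 - q 0) ^ 2 + (p 1 - q 1) ^ 2 ≤ r ^ 2 := by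
  rw [mem_closedBall, EuclideanSpace.dist_eq, Fin.sum_univ_two, Real.sqrt_le_left hr,
    Real.dist_eq, Real.dist_eq, sq_abs, sq_abs]

theorem EuclideanSpace.volume_preserving_toProd_fin_two :
    MeasurePreserving (fun p : EuclideanSpace ℝ (Fin 2) => (p 0, p 1)) :=
  (volume_preserving_piFinTwo fun _ => ℝ).comp (PiLp.volume_preserving_ofLp (Fin 2))

theorem sq_add_sq_le_and_lt_of_mem_Ioo {r z y x : ℝ} (hzr : z ≤ r) (hy : 4 * y ^ 2 ≤ 3 * r ^ 2)
    (hx : x ∈ Ioo (-√(r ^ 2 - y ^ 2)) (-√(r ^ 2 - y ^ 2) + z)) :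
    y ^ 2 + x ^ 2 ≤ r ^ 2 ∧ r ^ 2 < y ^ 2 + (x - z) ^ 2 := by
  set s := √(r ^ 2 - y ^ 2)
  have hs_sq : s ^ 2 = r ^ 2 - y ^ 2 := Real.sq_sqrt (by nlinarith)
  have hs : 0 ≤ s := Real.sqrt_nonneg _
  -- `4 s² ≥ r²`, so `z ≤ 2 s`
  have hzs : z ≤ 2 * s := by nlinarith
  obtain ⟨hx₁, hx₂⟩ := hx
  constructor <;> nlinarith

noncomputable def arcStrip (r z : ℝ) : Set (ℝ × ℝ) :=
  regionBetween (fun y => -√(r ^ 2 - y ^ 2)) (fun y => -√(r ^ 2 - y ^ 2) + z)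
    (Icc (-(√3 / 2 * r)) (√3 / 2 * r))

theorem measurableSet_arcStrip (r z : ℝ) : MeasurableSet (arcStrip r z) :=
  measurableSet_regionBetween (by fun_prop) (by fun_prop) measurableSet_Icc

theorem volume_arcStrip {r z : ℝ} (hz : 0 ≤ z) :
    volume (arcStrip r z) = ENNReal.ofReal (√3 * r * z) := by
  rw [arcStrip, Measure.volume_eq_prod, volume_regionBetween_add_const _ (by fun_prop)
    measurableSet_Icc, Real.volume_Icc, ← ENNReal.ofReal_mul hz]
  ring_nf

theorem preimage_arcStrip_subset_closedBall_diff {r z : ℝ} (hz : 0 ≤ z) (hzr : z ≤ r) :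
    (fun p : EuclideanSpace ℝ (Fin 2) => (p 0, p 1)) ⁻¹' arcStrip r z ⊆
      closedBall 0 r \ closedBall (EuclideanSpace.single (1 : Fin 2) z) r := by
  rintro p ⟨hy, hx⟩
  have hy_sq : 4 * p 0 ^ 2 ≤ 3 * r ^ 2 := by
    have := sq_le_sq' hy.1 hy.2
    rw [mul_pow, div_pow, Real.sq_sqrt zero_le_three] at this
    linarith
  have hr : 0 ≤ r := hz.trans hzr
  obtain ⟨h₁, h₂⟩ := sq_add_sq_le_and_lt_of_mem_Ioo hzr hy_sq hx
  simpa [EuclideanSpace.mem_closedBall_fin_two_iff hr] using And.intro h₁ h₂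

theorem stmt_12_general (r : ℝ) (x₁ x₂ : EuclideanSpace ℝ (Fin 2))
    (hz : dist x₂ x₁ ≤ r) :
    ENNReal.ofReal (Real.sqrt 3 * r * dist x₂ x₁) ≤
      volume (Metric.closedBall x₁ r \ Metric.closedBall x₂ r) := by
  set z := dist x₂ x₁
  have hdist : dist (EuclideanSpace.single (1 : Fin 2) z) 0 = z := by
    simp [abs_of_nonneg dist_nonneg, z]
  rw [volume_closedBall_diff_closedBall_congr hdist, ← volume_arcStrip dist_nonneg,
    ← EuclideanSpace.volume_preserving_toProd_fin_two.measure_preimage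
      (measurableSet_arcStrip r z).nullMeasurableSet]
  exact measure_mono (preimage_arcStrip_subset_closedBall_diff dist_nonneg hz)

/-- Let `D(x,r) ⊂ ℝ²` be the closed disk of radius `r` centered at `x`.  For
points `x₁, x₂` with `z = ‖x₂ - x₁‖ ≤ r`, the area of `D(x₁,r) \ D(x₂,r)` is
at least `√3 · r · z`. -/
theorem stmt_12 (r : ℝ) (hr : 0 < r) (x₁ x₂ : EuclideanSpace ℝ (Fin 2))
    (hz : dist x₂ x₁ ≤ r) :
    ENNReal.ofReal (Real.sqrt 3 * r * dist x₂ x₁) ≤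
      volume (Metric.closedBall x₁ r \ Metric.closedBall x₂ r) :=
  stmt_12_general r x₁ x₂ hz
end
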